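/- arXiv:2309.15240 — 4 statements merged into one kernel-verified Lean document; each statement's English description precedes it below -/
import Mathlib

section
/- For any vector v : Fin (2*n) → ℕ with monotone nondecreasing rearrangement w, the 'twist' of w, defined as (∑_{i=n}^{2n-1} w(i)) − (∑_{i=0}^{n-1} w(i)) (as an integer), is greater than or equal to the twist of v, i.e., (∑_{i=n}^{2n-1} v(i)) − (∑_{i=0}^{n-1} v(i)) ≤ (∑_{i=n}^{2n-1} w(i)) − (∑_{i=0}^{n-1} w(i)). -/
/-!
Write the twist of `u` as `∑ u - 2 ∑_{i<n} u i`. The total is invariant under permutation, and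
the lower half of the sorted vector `w` carries the smallest possible sum of `n` entries of `w`;
in particular it is at most the sum of `w` over the `n` positions that `σ` sends to the lower
half, which is the lower half sum of `v`.
-/

open Finset

section OrderedSums

variable {ι M : Type*} [AddCommMonoid M] [LinearOrder M] [IsOrderedAddMonoid M]

lemma Finset.sum_le_sum_of_card_eq_of_forall_le (f : ι → M) {s t : Finset ι} (hcard : #s = #t)
    (hst : ∀ i ∈ s, ∀ j ∈ t, f i ≤ f j) : ∑ i ∈ s, f i ≤ ∑ j ∈ t, f j := by
  rcases t.eq_empty_or_nonempty with rfl | ht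
  · rw [card_eq_zero.mp hcard]
  obtain ⟨j₀, hj₀, hmin⟩ := t.exists_min_image f ht
  calc ∑ i ∈ s, f i ≤ #s • f j₀ := sum_le_card_nsmul _ _ _ fun i hi ↦ hst i hi j₀ hj₀
    _ = #t • f j₀ := by rw [hcard]
    _ ≤ ∑ j ∈ t, f j := card_nsmul_le_sum _ _ _ hmin

lemma Monotone.sum_le_sum_of_isLowerSet [LinearOrder ι] {f : ι → M} (hf : Monotone f)
    {s t : Finset ι} (hs : IsLowerSet (s : Set ι)) (hcard : #s = #t) :
    ∑ i ∈ s, f i ≤ ∑ j ∈ t, f j := by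
  rw [← sum_inter_add_sum_sdiff s t, ← sum_inter_add_sum_sdiff t s, inter_comm]
  refine add_le_add_right (sum_le_sum_of_card_eq_of_forall_le f (card_sdiff_comm hcard) ?_) _
  intro i hi j hj
  refine hf (le_of_lt (not_le.mp fun hji ↦ ?_))
  exact (mem_sdiff.mp hj).2 (hs hji (mem_sdiff.mp hi).1)

end OrderedSums

lemma Fin.sum_filter_le_eq_sum_sub {G : Type*} [AddCommGroup G] {m : ℕ} (n : ℕ) (u : Fin m → G) :
    ∑ i ∈ univ.filter (fun i : Fin m ↦ n ≤ (i : ℕ)), u i =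
      ∑ i, u i - ∑ i ∈ univ.filter (fun i : Fin m ↦ (i : ℕ) < n), u i := by
  rw [eq_sub_iff_add_eq, add_comm, ← sum_filter_add_sum_filter_not univ (fun i : Fin m ↦ (i : ℕ) < n)]
  simp only [not_lt]

/-- For a vector over `Fin (2*n)`, the twist (upper-half sum minus lower-half sum,
as an integer) of its nondecreasing rearrangement is at least the twist of the
original vector. -/
theorem sorted_twist_ge (n : ℕ) (v w : Fin (2 * n) → ℕ) (σ : Equiv.Perm (Fin (2 * n)))
    (hperm : w = v ∘ σ) (hmono : Monotone w) :
    (∑ i ∈ Finset.univ.filter (fun i : Fin (2 * n) => n ≤ (i : ℕ)), (v i : ℤ)) -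
        ∑ i ∈ Finset.univ.filter (fun i : Fin (2 * n) => (i : ℕ) < n), (v i : ℤ) ≤
      (∑ i ∈ Finset.univ.filter (fun i : Fin (2 * n) => n ≤ (i : ℕ)), (w i : ℤ)) -
        ∑ i ∈ Finset.univ.filter (fun i : Fin (2 * n) => (i : ℕ) < n), (w i : ℤ) := by
  set L := univ.filter (fun i : Fin (2 * n) ↦ (i : ℕ) < n)
  have htotal : ∑ i, (w i : ℤ) = ∑ i, (v i : ℤ) := by
    rw [hperm]; exact Equiv.sum_comp σ (fun i ↦ (v i : ℤ))
  have hlower_v : ∑ i ∈ L, (v i : ℤ) = ∑ j ∈ L.map σ.symm.toEmbedding, (w j : ℤ) := by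
    simp [sum_map, hperm]
  have hlower : ∑ i ∈ L, (w i : ℤ) ≤ ∑ i ∈ L, (v i : ℤ) := by
    rw [hlower_v]
    refine (Nat.mono_cast.comp hmono).sum_le_sum_of_isLowerSet ?_ (card_map _).symm
    intro i j hji hi
    simp only [L, coe_filter, mem_univ, true_and, Set.mem_ofPred_eq] at hi ⊢
    exact lt_of_le_of_lt hji hi
  rw [Fin.sum_filter_le_eq_sum_sub, Fin.sum_filter_le_eq_sum_sub, htotal]
  linarith
end

section
/- Let f^0, …, f^{λ−1} : Fin 26 → ℕ with entrywise sum f sorted nondecreasing, and g^l the nondecreasing rearrangement of f^l. Define the twist of a vector u as the integer (∑_{i=13}^{25} u(i)) − (∑_{i=0}^{12} u(i)). Then twist(f) ≤ ∑_{l=0}^{λ−1} twist(g^l). -/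
/-!
Write the twist as `∑ i, ε i * u i` with the nondecreasing sign vector `ε = (-1, …, -1, 1, …, 1)`.
In this form it is additive, so the twist of `f` is the sum of the twists of the `fs l`; and by the
rearrangement inequality `ε` paired with a vector is largest when the vector is sorted, so each
`fs l` has twist at most that of its sorted rearrangement `gs l`.
-/

open Finset

section

variable {n : ℕ} (k : ℕ)

def twistSign (i : Fin n) : ℤ := if k ≤ (i : ℕ) then 1 else -1

lemma monotone_twistSign : Monotone (twistSign (n := n) k) := fun i j hij => by
  unfold twistSign
  split_ifs <;> omega

def twist (u : Fin n → ℤ) : ℤ :=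
  ∑ i ∈ univ.filter (fun i : Fin n => k ≤ (i : ℕ)), u i -
    ∑ i ∈ univ.filter (fun i : Fin n => (i : ℕ) < k), u i

lemma twist_eq_sum_twistSign_mul (u : Fin n → ℤ) : twist k u = ∑ i, twistSign k i * u i := by
  simp only [twistSign, ite_mul, one_mul, neg_one_mul, sum_ite, sum_neg_distrib, not_le]
  rfl

lemma twist_sum {ι : Type*} (s : Finset ι) (u : ι → Fin n → ℤ) :
    twist k (fun i => ∑ l ∈ s, u l i) = ∑ l ∈ s, twist k (u l) := by
  simp only [twist_eq_sum_twistSign_mul, mul_sum]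
  exact sum_comm

lemma twist_comp_perm_le {g : Fin n → ℤ} (hg : Monotone g) (σ : Equiv.Perm (Fin n)) :
    twist k (g ∘ σ) ≤ twist k g := by
  simp only [twist_eq_sum_twistSign_mul]
  exact ((monotone_twistSign k).monovary hg).sum_mul_comp_perm_le_sum_mul

end

theorem twist_le_sum_of_parts_general (lam : ℕ) (f : Fin 26 → ℕ)
    (fs gs : Fin lam → Fin 26 → ℕ)
    (hsum : ∀ i, f i = ∑ l, fs l i)
    (σ : Fin lam → Equiv.Perm (Fin 26))
    (hperm : ∀ l, gs l = fs l ∘ σ l) (hgmono : ∀ l, Monotone (gs l)) :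
    (∑ i ∈ Finset.univ.filter (fun i : Fin 26 => 13 ≤ (i : ℕ)), (f i : ℤ)) -
        (∑ i ∈ Finset.univ.filter (fun i : Fin 26 => (i : ℕ) < 13), (f i : ℤ)) ≤
      ∑ l, ((∑ i ∈ Finset.univ.filter (fun i : Fin 26 => 13 ≤ (i : ℕ)), (gs l i : ℤ)) -
        ∑ i ∈ Finset.univ.filter (fun i : Fin 26 => (i : ℕ) < 13), (gs l i : ℤ)) := by
  have hfs : ∀ l, (fun i => (fs l i : ℤ)) = (fun i => (gs l i : ℤ)) ∘ (σ l).symm := fun l => by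
    ext i
    simp [hperm]
  calc twist 13 (fun i => (f i : ℤ))
      = ∑ l, twist 13 (fun i => (fs l i : ℤ)) := by
        simp only [hsum, Nat.cast_sum]
        exact twist_sum 13 univ _
    _ ≤ ∑ l, twist 13 (fun i => (gs l i : ℤ)) := sum_le_sum fun l _ => by
        rw [hfs l]
        exact twist_comp_perm_le 13 (Nat.mono_cast.comp (hgmono l)) _

/-- With `f` the sorted entrywise sum of the `fs l` and each `gs l` the sorted
rearrangement of `fs l`, the (integer) twist of `f` is at most the sum of the
twists of the `gs l`. -/
theorem twist_le_sum_of_parts (lam : ℕ) (f : Fin 26 → ℕ)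
    (fs gs : Fin lam → Fin 26 → ℕ)
    (hsum : ∀ i, f i = ∑ l, fs l i) (hfmono : Monotone f)
    (σ : Fin lam → Equiv.Perm (Fin 26))
    (hperm : ∀ l, gs l = fs l ∘ σ l) (hgmono : ∀ l, Monotone (gs l)) :
    (∑ i ∈ Finset.univ.filter (fun i : Fin 26 => 13 ≤ (i : ℕ)), (f i : ℤ)) -
        (∑ i ∈ Finset.univ.filter (fun i : Fin 26 => (i : ℕ) < 13), (f i : ℤ)) ≤
      ∑ l, ((∑ i ∈ Finset.univ.filter (fun i : Fin 26 => 13 ≤ (i : ℕ)), (gs l i : ℤ)) -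
        ∑ i ∈ Finset.univ.filter (fun i : Fin 26 => (i : ℕ) < 13), (gs l i : ℤ)) :=
  twist_le_sum_of_parts_general lam f fs gs hsum σ hperm hgmono
end

section
/- The sum of the 13 largest entries function is subadditive and the sum of the 13 smallest entries function is superadditive: for A, B : Fin 26 → ℕ, letting L(u) denote the sum of the 13 smallest entries of u, one has L(A) + L(B) ≤ L(A + B). -/
lemma fin_le_apply {n m : ℕ} (f : Fin n ↪o Fin m) : ∀ k : Fin n, (k : ℕ) ≤ (f k : ℕ) := by
  intro k
  obtain ⟨v, hv⟩ := k
  induction v with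
  | zero => simp
  | succ i ih =>
    have hi : i < n := Nat.lt_of_succ_lt hv
    have h1 := ih hi
    have h2 : (f ⟨i, hi⟩ : ℕ) < (f ⟨i + 1, hv⟩ : ℕ) := f.strictMono (by simp [Fin.lt_def])
    simp only [Fin.val_mk] at h1 h2 ⊢
    omega

lemma lower_sum_le (w : Fin 26 → ℕ) (hw : Monotone w) (T : Finset (Fin 26))
    (hT : T.card = 13) :
    ∑ i ∈ Finset.univ.filter (fun i : Fin 26 => (i : ℕ) < 13), w i ≤ ∑ i ∈ T, w i := by
  have hmap : Finset.map (T.orderEmbOfFin hT).toEmbedding Finset.univ = T := by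
    ext i
    simp only [Finset.mem_map, Finset.mem_univ, true_and, RelEmbedding.coe_toEmbedding]
    constructor
    · rintro ⟨k, rfl⟩; exact T.orderEmbOfFin_mem hT k
    · intro hi
      have hr := Finset.range_orderEmbOfFin T hT
      have : i ∈ Set.range (T.orderEmbOfFin hT) := by rw [hr]; exact hi
      exact this
  have hfil : Finset.univ.filter (fun i : Fin 26 => (i : ℕ) < 13)
      = Finset.map (Fin.castLEOrderEmb (by norm_num : (13:ℕ) ≤ 26)).toEmbedding
          Finset.univ := by decide
  rw [← hmap, hfil, Finset.sum_map, Finset.sum_map]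
  apply Finset.sum_le_sum
  intro k _
  apply hw
  have := fin_le_apply (T.orderEmbOfFin hT) k
  exact Fin.le_def.mpr this

lemma lower_sum_le' (u w : Fin 26 → ℕ) (σ : Equiv.Perm (Fin 26))
    (hwu : w = u ∘ σ) (hw : Monotone w) (T : Finset (Fin 26)) (hT : T.card = 13) :
    ∑ i ∈ Finset.univ.filter (fun i : Fin 26 => (i : ℕ) < 13), w i ≤ ∑ j ∈ T, u j := by
  have : ∑ j ∈ T, u j = ∑ i ∈ T.image σ.symm, w i := by
    rw [Finset.sum_image (fun a _ b _ h => σ.symm.injective h)]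
    subst hwu; simp
  rw [this]
  exact lower_sum_le w hw _ (by rw [Finset.card_image_of_injective _ σ.symm.injective, hT])

/-- Superadditivity of the sorted lower-half sum: the sum of the 13 smallest
entries of `A` plus that of `B` is at most the sum of the 13 smallest entries
of `A + B`. -/
theorem sorted_lower_half_sum_superadditive (A B wA wB C : Fin 26 → ℕ)
    (σA σB σC : Equiv.Perm (Fin 26))
    (hwA : wA = A ∘ σA) (hwAmono : Monotone wA)
    (hwB : wB = B ∘ σB) (hwBmono : Monotone wB)
    (hC : C = (A + B) ∘ σC) (hCmono : Monotone C) :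
    (∑ i ∈ Finset.univ.filter (fun i : Fin 26 => (i : ℕ) < 13), wA i) +
        (∑ i ∈ Finset.univ.filter (fun i : Fin 26 => (i : ℕ) < 13), wB i) ≤
      ∑ i ∈ Finset.univ.filter (fun i : Fin 26 => (i : ℕ) < 13), C i := by
  set F := Finset.univ.filter (fun i : Fin 26 => (i : ℕ) < 13) with hF
  set T := F.image σC with hTdef
  have hFcard : F.card = 13 := by decide
  have hTcard : T.card = 13 := by
    rw [hTdef, Finset.card_image_of_injective _ σC.injective, hFcard]
  have hCsum : ∑ i ∈ F, C i = (∑ j ∈ T, A j) + ∑ j ∈ T, B j := by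
    rw [hTdef, Finset.sum_image (fun a _ b _ h => σC.injective h),
        Finset.sum_image (fun a _ b _ h => σC.injective h), ← Finset.sum_add_distrib]
    subst hC; simp
  rw [hCsum]
  exact Nat.add_le_add (lower_sum_le' A wA σA hwA hwAmono T hTcard)
    (lower_sum_le' B wB σB hwB hwBmono T hTcard)
end

section
/- Lemma 2.1 (full statement, equal subcoset sizes): Let a text M be partitioned into m cosets each of size divisible by λ, let f_j : Fin 26 → ℕ be the letter-frequency vector of the j-th m-coset (so ∑_i f_j(i) = n_j with λ ∣ n_j, n_j > 0), and let f_{j,l}, 0 ≤ l < λ, be frequency vectors of a partition of the j-th coset into λ subcosets each of size n_j/λ (so ∑_l f_{j,l} = f_j entrywise and ∑_i f_{j,l}(i) = n_j/λ). Define the normalized twist ♦u = (U(u) − L(u))/(∑_i u(i)) ∈ ℚ for a nonzero vector u, with U, L the sums of the 13 largest resp. 13 smallest entries. Then (1/m)·∑_{j=1}^m ♦f_j ≤ (1/(λm))·∑_{j=1}^m ∑_{l=0}^{λ−1} ♦f_{j,l}. -/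
/-- The sum of the 13 largest entries of `u : Fin 26 → ℕ`. -/
def upperSum (u : Fin 26 → ℕ) : ℕ :=
  ∑ i ∈ Finset.univ.filter (fun i : Fin 26 => 13 ≤ (i : ℕ)), (u ∘ Tuple.sort u) i

/-- The sum of the 13 smallest entries of `u : Fin 26 → ℕ`. -/
def lowerSum (u : Fin 26 → ℕ) : ℕ :=
  ∑ i ∈ Finset.univ.filter (fun i : Fin 26 => (i : ℕ) < 13), (u ∘ Tuple.sort u) i

/-- The normalized twist `♦u` of a frequency vector `u`, over `ℚ`. -/
def ntwist (u : Fin 26 → ℕ) : ℚ :=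
  ((upperSum u : ℚ) - (lowerSum u : ℚ)) / (∑ i, u i : ℕ)

/-!
`upperSum u` is the largest sum of `13` entries of `u`, so it is subadditive, and
`upperSum u + lowerSum u = ∑ i, u i`, so `♦u = 2 · upperSum u / ∑ u - 1`. If `f` splits into
`λ` pieces of equal size `k`, then `∑ f = λk` and subadditivity gives
`♦f ≤ (2 ∑ₗ upperSum gₗ - λk) / (λk)`, which is exactly the average of the `♦gₗ`.
-/

open Finset

section Exchange

variable {ι M : Type*} [AddCommMonoid M] [PartialOrder M] [IsOrderedCancelAddMonoid M]

theorem Finset.sum_le_sum_of_card_eq_of_le_of_le [DecidableEq ι] {s t : Finset ι} {f : ι → M}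
    (c : M) (hst : #s = #t) (hs : ∀ i ∈ s \ t, f i ≤ c) (ht : ∀ i ∈ t \ s, c ≤ f i) :
    ∑ i ∈ s, f i ≤ ∑ i ∈ t, f i := by
  rw [← sum_sdiff_le_sum_sdiff]
  calc ∑ i ∈ s \ t, f i ≤ #(s \ t) • c := sum_le_card_nsmul _ _ _ hs
    _ = #(t \ s) • c := by rw [card_sdiff_comm hst]
    _ ≤ ∑ i ∈ t \ s, f i := card_nsmul_le_sum _ _ _ ht

theorem Monotone.sum_le_sum_filter_le {n a : ℕ} (ha : a < n) {v : Fin n → M} (hv : Monotone v)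
    {T : Finset (Fin n)} (hT : #T = #(univ.filter fun i : Fin n => a ≤ (i : ℕ))) :
    ∑ i ∈ T, v i ≤ ∑ i ∈ univ.filter (fun i : Fin n => a ≤ (i : ℕ)), v i := by
  refine sum_le_sum_of_card_eq_of_le_of_le (v ⟨a, ha⟩) hT (fun i hi => hv ?_) fun i hi => hv ?_
  · simp only [mem_sdiff, mem_filter, mem_univ, true_and, not_le] at hi
    exact Fin.mk_le_of_le_val hi.2.le
  · simp only [mem_sdiff, mem_filter, mem_univ, true_and] at hi
    exact Fin.mk_le_of_le_val hi.1

end Exchange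

theorem card_filter_thirteen_le_val : #(univ.filter fun i : Fin 26 => 13 ≤ (i : ℕ)) = 13 := by
  decide

theorem sum_le_upperSum (u : Fin 26 → ℕ) {T : Finset (Fin 26)} (hT : #T = 13) :
    ∑ i ∈ T, u i ≤ upperSum u := by
  let σ := Tuple.sort u
  calc ∑ i ∈ T, u i = ∑ i ∈ T.map σ.symm.toEmbedding, (u ∘ σ) i := by simp
    _ ≤ upperSum u := (Tuple.monotone_sort u).sum_le_sum_filter_le (by norm_num)
        (by rw [card_map, hT, card_filter_thirteen_le_val])

theorem exists_card_eq_upperSum_eq_sum (u : Fin 26 → ℕ) :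
    ∃ T : Finset (Fin 26), #T = 13 ∧ upperSum u = ∑ i ∈ T, u i :=
  ⟨(univ.filter fun i : Fin 26 => 13 ≤ (i : ℕ)).map (Tuple.sort u).toEmbedding,
    by rw [card_map, card_filter_thirteen_le_val], by rw [sum_map]; rfl⟩

theorem upperSum_add_lowerSum (u : Fin 26 → ℕ) : upperSum u + lowerSum u = ∑ i, u i := by
  rw [upperSum, lowerSum, ← Equiv.sum_comp (Tuple.sort u) u]
  simp_rw [← not_le]
  exact sum_filter_add_sum_filter_not _ _ _

theorem upperSum_sum_le {ι : Type*} (s : Finset ι) (g : ι → Fin 26 → ℕ) :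
    upperSum (∑ l ∈ s, g l) ≤ ∑ l ∈ s, upperSum (g l) := by
  obtain ⟨T, hT, hsum⟩ := exists_card_eq_upperSum_eq_sum (∑ l ∈ s, g l)
  calc upperSum (∑ l ∈ s, g l) = ∑ i ∈ T, ∑ l ∈ s, g l i := by simp only [hsum, Finset.sum_apply]
    _ = ∑ l ∈ s, ∑ i ∈ T, g l i := sum_comm
    _ ≤ ∑ l ∈ s, upperSum (g l) := sum_le_sum fun l _ => sum_le_upperSum (g l) hT

theorem ntwist_eq (u : Fin 26 → ℕ) :
    ntwist u = (2 * upperSum u - (∑ i, u i : ℕ)) / (∑ i, u i : ℕ) := by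
  have h : (upperSum u + lowerSum u : ℚ) = (∑ i, u i : ℕ) := by
    exact_mod_cast upperSum_add_lowerSum u
  rw [ntwist, ← h]
  ring_nf

theorem ntwist_sum_le_of_sum_eq {ι : Type*} (s : Finset ι) (g : ι → Fin 26 → ℕ) {k : ℕ}
    (hg : ∀ l ∈ s, ∑ i, g l i = k) :
    ntwist (∑ l ∈ s, g l) ≤ 1 / #s * ∑ l ∈ s, ntwist (g l) := by
  have htotal : (∑ i, (∑ l ∈ s, g l) i : ℕ) = (#s * k : ℚ) := by
    simp only [Finset.sum_apply]
    rw [sum_comm, sum_congr rfl hg, sum_const, smul_eq_mul, Nat.cast_mul]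
  have hU : (upperSum (∑ l ∈ s, g l) : ℚ) ≤ ∑ l ∈ s, (upperSum (g l) : ℚ) := by
    exact_mod_cast upperSum_sum_le s g
  calc ntwist (∑ l ∈ s, g l)
      = (2 * upperSum (∑ l ∈ s, g l) - #s * k : ℚ) / (#s * k) := by rw [ntwist_eq, htotal]
    _ ≤ (2 * ∑ l ∈ s, (upperSum (g l) : ℚ) - #s * k) / (#s * k) := by
        have hden : (0 : ℚ) ≤ #s * k := mul_nonneg (Nat.cast_nonneg _) (Nat.cast_nonneg _)
        exact div_le_div_of_nonneg_right (by linarith) hden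
    _ = 1 / #s * ∑ l ∈ s, (2 * upperSum (g l) - k : ℚ) / k := by
        rw [← sum_div, sum_sub_distrib, ← mul_sum, sum_const, nsmul_eq_mul]; ring
    _ = 1 / #s * ∑ l ∈ s, ntwist (g l) := by
        congr 1; exact sum_congr rfl fun l hl => by rw [ntwist_eq, hg l hl]

theorem twist_index_le_of_refinement_general (m lam : ℕ)
    (f : Fin m → Fin 26 → ℕ) (g : Fin m → Fin lam → Fin 26 → ℕ)
    (n : Fin m → ℕ)
    (hsplit : ∀ j i, f j i = ∑ l, g j l i)
    (hsize : ∀ j l, ∑ i, g j l i = n j / lam) :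
    (1 / (m : ℚ)) * ∑ j, ntwist (f j) ≤
      (1 / ((lam : ℚ) * m)) * ∑ j, ∑ l, ntwist (g j l) := by
  have hf : ∀ j, f j = ∑ l, g j l := fun j => funext fun i => by rw [hsplit, Finset.sum_apply]
  calc (1 / (m : ℚ)) * ∑ j, ntwist (f j)
      ≤ (1 / (m : ℚ)) * ∑ j, (1 / (lam : ℚ) * ∑ l, ntwist (g j l)) := by
        gcongr with j
        simpa only [hf j, card_univ, Fintype.card_fin] using ntwist_sum_le_of_sum_eq univ (g j) fun l _ => hsize j l
    _ = (1 / ((lam : ℚ) * m)) * ∑ j, ∑ l, ntwist (g j l) := by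
        rw [← mul_sum]; ring

/-- Lemma 2.1 (equal subcoset sizes): if each coset frequency vector `f j`
(of total size `n j > 0` divisible by `lam`) splits as an entrywise sum of
`lam` subcoset frequency vectors `g j l`, each of total size `n j / lam`, then
the average normalized twist over the `m` cosets is at most the average
normalized twist over the `lam * m` subcosets. -/
theorem twist_index_le_of_refinement (m lam : ℕ) (hm : 0 < m) (hlam : 0 < lam)
    (f : Fin m → Fin 26 → ℕ) (g : Fin m → Fin lam → Fin 26 → ℕ)
    (n : Fin m → ℕ) (hn : ∀ j, ∑ i, f j i = n j)
    (hnpos : ∀ j, 0 < n j) (hdvd : ∀ j, lam ∣ n j)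
    (hsplit : ∀ j i, f j i = ∑ l, g j l i)
    (hsize : ∀ j l, ∑ i, g j l i = n j / lam) :
    (1 / (m : ℚ)) * ∑ j, ntwist (f j) ≤
      (1 / ((lam : ℚ) * m)) * ∑ j, ∑ l, ntwist (g j l) :=
  twist_index_le_of_refinement_general m lam f g n hsplit hsize
end
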